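/- arXiv:2206.00956 — 3 statements merged into one kernel-verified Lean document; each statement's English description precedes it below -/
import Mathlib

section
/- Let ℝ^N = ℝ^p ⊕ ℝ^q be the orthogonal splitting with p+q = N, where ℝ^p is spanned by e₁,…,e_p and ℝ^q by n_r := e_{p+r}, r = 1,…,q. Let B : ℝ^p × ℝ^p → ℝ^q be a symmetric bilinear map and let B* : ℝ^p × ℝ^q → ℝ^p be its partial adjoint, characterized by ⟨B(x,y), n⟩ = ⟨y, B*(x,n)⟩ for all x, y ∈ ℝ^p and n ∈ ℝ^q. For X ∈ ℝ^p set B(X) := Σ_{j=1}^p e_j · B(X, e_j) ∈ Cl(N). Then for all X, Y ∈ ℝ^p: (1/4)(B(Y)·B(X) − B(X)·B(Y)) = (1/2)·Σ_{1≤j<k≤p} ( ⟨B*(X, B(Y,e_j)), e_k⟩ − ⟨B*(Y, B(X,e_j)), e_k⟩ ) e_j·e_k + (1/2)·Σ_{1≤r<s≤q} ( ⟨B(X, B*(Y,n_r)), n_s⟩ − ⟨B(Y, B*(X,n_r)), n_s⟩ ) n_r·n_s. In particular, for every Z = Z_p + Z_q ∈ ℝ^p ⊕ ℝ^q, [(1/4)(B(Y)·B(X)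 − B(X)·B(Y)), Z] = B*(X, B(Y, Z_p)) − B*(Y, B(X, Z_p)) + B(X, B*(Y, Z_q)) − B(Y, B*(X, Z_q)). -/
/-!
`Cl(N)` for `N = p + q` is modelled as the Clifford algebra of `(Fin p ⊕ Fin q) → ℝ`
for the quadratic form `Qneg v = -⟨v,v⟩`, with `⟨·,·⟩ = dotp` the standard scalar product.
`ℝ^p` (spanned by `e_j := eb j` at the indices `Sum.inl j`) and `ℝ^q` (spanned by
`n_r := eb r` at the indices `Sum.inr r`) are embedded by extension by zero via `inlm`, `inrm`.
-/

noncomputable section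

/-- The standard scalar product on `ι → ℝ`. -/
def dotp {ι : Type*} [Fintype ι] (x y : ι → ℝ) : ℝ := ∑ i, x i * y i

/-- The quadratic form `Q(v) = -⟨v,v⟩` on `ι → ℝ`. -/
def Qneg (ι : Type*) [Fintype ι] : QuadraticForm ℝ (ι → ℝ) :=
  QuadraticMap.weightedSumSquares ℝ (fun _ : ι => (-1 : ℝ))

/-- The canonical embedding of `ℝ^N` in its Clifford algebra. -/
def ιC {ι : Type*} [Fintype ι] (v : ι → ℝ) : CliffordAlgebra (Qneg ι) :=
  CliffordAlgebra.ι (Qneg ι) v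

/-- The canonical basis of `ι → ℝ`. -/
def eb {ι : Type*} [DecidableEq ι] (j : ι) : ι → ℝ := Pi.single j 1

/-- The isometric inclusion `ℝ^p → ℝ^p ⊕ ℝ^q` (extension by zero). -/
def inlm (p q : ℕ) : (Fin p → ℝ) →ₗ[ℝ] ((Fin p ⊕ Fin q) → ℝ) where
  toFun x := Sum.elim x 0
  map_add' x y := by funext z; cases z <;> simp
  map_smul' c x := by funext z; cases z <;> simp

/-- The isometric inclusion `ℝ^q → ℝ^p ⊕ ℝ^q` (extension by zero). -/
def inrm (p q : ℕ) : (Fin q → ℝ) →ₗ[ℝ] ((Fin p ⊕ Fin q) → ℝ) where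
  toFun x := Sum.elim 0 x
  map_add' x y := by funext z; cases z <;> simp
  map_smul' c x := by funext z; cases z <;> simp

/-- The Clifford element `B(X) := Σ_{j=1}^p e_j · B(X, e_j) ∈ Cl(N)` associated to a
bilinear map `B : ℝ^p × ℝ^p → ℝ^q`. -/
def Bcl (p q : ℕ) (B : (Fin p → ℝ) →ₗ[ℝ] (Fin p → ℝ) →ₗ[ℝ] (Fin q → ℝ)) (X : Fin p → ℝ) :
    CliffordAlgebra (Qneg (Fin p ⊕ Fin q)) :=
  ∑ j : Fin p, ιC (inlm p q (eb j)) * ιC (inrm p q (B X (eb j)))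

/-!
Every `e_j` anticommutes with every vector of `ℝ^q`, so
`B(Y)·B(X) − B(X)·B(Y) = Σ_{j,k} e_j e_k · N_{jk}` with
`N_{jk} = B(X,e_j)·B(Y,e_k) − B(Y,e_j)·B(X,e_k)`. Symmetrising in `(j,k)` with
`e_k e_j = −2δ_{jk} − e_j e_k` leaves the off-diagonal part, whose coefficients
`(N_{jk} − N_{kj})/2 = ⟨B(Y,e_j),B(X,e_k)⟩ − ⟨B(X,e_j),B(Y,e_k)⟩` are scalars by the Clifford
relation, and the diagonal part `Σ_j [B(Y,e_j), B(X,e_j)]`, a bivector of `ℝ^q`. Both coefficient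
matrices are antisymmetric; `B*` only enters when they are rewritten with the adjoint relation.
The commutator formula then follows from `[u·v, w] = 2⟨u,w⟩v − 2⟨v,w⟩u`.
-/

section Euclidean

variable {ι : Type*} [Fintype ι]

lemma dotp_eq_dotProduct (x y : ι → ℝ) : dotp x y = x ⬝ᵥ y := rfl

lemma dotp_comm (x y : ι → ℝ) : dotp x y = dotp y x := dotProduct_comm x y

lemma dotp_add_right (x y z : ι → ℝ) : dotp x (y + z) = dotp x y + dotp x z :=
  dotProduct_add x y z

lemma dotp_eb_right [DecidableEq ι] (x : ι → ℝ) (i : ι) : dotp x (eb i) = x i := by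
  rw [dotp_eq_dotProduct, eb, dotProduct_single, mul_one]

lemma dotp_eb_left [DecidableEq ι] (x : ι → ℝ) (i : ι) : dotp (eb i) x = x i := by
  rw [dotp_comm, dotp_eb_right]

lemma dotp_eb_eb_of_ne [DecidableEq ι] {i j : ι} (h : i ≠ j) :
    dotp (eb i) (eb j) = 0 := by
  rw [dotp_eb_right, eb, Pi.single_eq_of_ne h.symm]

lemma sum_smul_eb [DecidableEq ι] (x : ι → ℝ) : ∑ i, x i • eb i = x :=
  (pi_eq_sum_univ' x).symm

lemma map_eq_sum_smul_eb [DecidableEq ι] {M : Type*} [AddCommGroup M] [Module ℝ M]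
    (f : (ι → ℝ) →ₗ[ℝ] M) (x : ι → ℝ) : f x = ∑ i, x i • f (eb i) := by
  conv_lhs => rw [← sum_smul_eb x]
  simp only [map_sum, map_smul]

lemma sum_sum_apply_mul_smul_eb {κ : Type*} [Fintype κ] [DecidableEq κ] [DecidableEq ι]
    (f : (κ → ℝ) →ₗ[ℝ] (ι → ℝ)) (x : κ → ℝ) :
    ∑ j, ∑ k, (f (eb j) k * x j) • eb k = f x := by
  conv_rhs => rw [← sum_smul_eb (f x), map_eq_sum_smul_eb f x]
  rw [Finset.sum_comm]
  simp only [Finset.sum_apply, Pi.smul_apply, smul_eq_mul, Finset.sum_smul, mul_comm]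

end Euclidean

lemma sum_sum_eq_two_nsmul_sum_sum_Ioi {κ M : Type*} [Fintype κ] [LinearOrder κ]
    [LocallyFiniteOrderTop κ] [LocallyFiniteOrderBot κ] [AddCommMonoid M]
    (f : κ → κ → M) (hdiag : ∀ i, f i i = 0) (hsymm : ∀ i j, f j i = f i j) :
    ∑ i, ∑ j, f i j = 2 • ∑ i, ∑ j ∈ Finset.Ioi i, f i j := by
  have hrow : ∀ i, ∑ j, f i j = ∑ j ∈ Finset.Ioi i, f i j + ∑ j ∈ Finset.Iio i, f i j := by
    intro i
    rw [← Finset.sum_filter_add_sum_filter_not Finset.univ (i < ·)]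
    simp only [not_lt, Finset.filter_lt_eq_Ioi, Finset.filter_ge_eq_Iic, Finset.Iic_eq_cons_Iio,
      Finset.sum_cons, hdiag, zero_add]
  have hlower : ∑ i, ∑ j ∈ Finset.Iio i, f i j = ∑ i, ∑ j ∈ Finset.Ioi i, f i j := by
    rw [Finset.sum_comm' (t' := Finset.univ) (s' := Finset.Ioi) (by simp)]
    exact Finset.sum_congr rfl fun i _ => Finset.sum_congr rfl fun j _ => hsymm i j
  rw [Finset.sum_congr rfl fun i _ => hrow i, Finset.sum_add_distrib, hlower, two_nsmul]

section Clifford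

variable {ι : Type*} [Fintype ι]

lemma polar_Qneg (u v : ι → ℝ) : QuadraticMap.polar (Qneg ι) u v = -2 * dotp u v := by
  simp only [QuadraticMap.polar, Qneg, QuadraticMap.weightedSumSquares_apply, dotp,
    ← Finset.sum_sub_distrib, Finset.mul_sum]
  exact Finset.sum_congr rfl fun i _ => by simp only [Pi.add_apply, smul_eq_mul]; ring

lemma ιC_eq_ι : (ιC : (ι → ℝ) → CliffordAlgebra (Qneg ι)) = CliffordAlgebra.ι (Qneg ι) := rfl

lemma ιC_mul_ιC_add_swap (u v : ι → ℝ) :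
    ιC u * ιC v + ιC v * ιC u = (-2 * dotp u v) • (1 : CliffordAlgebra (Qneg ι)) := by
  rw [ιC_eq_ι, CliffordAlgebra.ι_mul_ι_add_swap, polar_Qneg, Algebra.algebraMap_eq_smul_one]

lemma isOrtho_Qneg {u v : ι → ℝ} (h : dotp u v = 0) : (Qneg ι).IsOrtho u v := by
  rw [← QuadraticMap.isOrtho_polarBilin, QuadraticMap.polarBilin_apply_apply, polar_Qneg, h,
    mul_zero]

lemma ιC_mul_ιC_mul_add_swap (a b : ι → ℝ) (m m' : CliffordAlgebra (Qneg ι)) :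
    ιC a * ιC b * m + ιC b * ιC a * m' = ιC a * ιC b * (m - m') + (-2 * dotp a b) • m' := by
  rw [eq_sub_of_add_eq' (ιC_mul_ιC_add_swap a b), sub_mul, smul_mul_assoc, one_mul, mul_sub]
  abel

lemma ιC_mul_ιC_sub_swap (x y x' y' : ι → ℝ) :
    (ιC x * ιC y' - ιC y * ιC x') - (ιC x' * ιC y - ιC y' * ιC x)
      = (2 * (dotp y x' - dotp x y')) • (1 : CliffordAlgebra (Qneg ι)) := by
  have h : (ιC x * ιC y' - ιC y * ιC x') - (ιC x' * ιC y - ιC y' * ιC x)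
      = (ιC x * ιC y' + ιC y' * ιC x) - (ιC y * ιC x' + ιC x' * ιC y) := by abel
  rw [h, ιC_mul_ιC_add_swap, ιC_mul_ιC_add_swap, ← sub_smul]
  ring_nf

lemma ιC_mul_ιC_commutator_ιC (u v w : ι → ℝ) :
    ιC u * ιC v * ιC w - ιC w * (ιC u * ιC v)
      = ιC ((2 * dotp u w) • v - (2 * dotp v w) • u) := by
  have h : ιC u * ιC v * ιC w - ιC w * (ιC u * ιC v)
      = ιC u * (ιC v * ιC w + ιC w * ιC v) - (ιC u * ιC w + ιC w * ιC u) * ιC v := by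
    noncomm_ring
  rw [h, ιC_mul_ιC_add_swap, ιC_mul_ιC_add_swap, mul_smul_comm, mul_one, smul_mul_assoc, one_mul,
    ιC_eq_ι, map_sub, map_smul, map_smul]
  module

lemma sum_smul_ιC_mul_ιC_commutator_ιC {κ : Type*} [Fintype κ] (u : κ → ι → ℝ)
    (A : κ → κ → ℝ) (hA : ∀ i j, A j i = -A i j) (w : ι → ℝ) :
    (∑ i, ∑ j, A i j • (ιC (u i) * ιC (u j))) * ιC w
        - ιC w * ∑ i, ∑ j, A i j • (ιC (u i) * ιC (u j))
      = (4 : ℝ) • ιC (∑ i, ∑ j, (A i j * dotp (u i) w) • u j) := by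
  let commutator := LinearMap.mulRight ℝ (ιC w) - LinearMap.mulLeft ℝ (ιC w)
  change commutator _ = _
  simp only [map_sum, map_smul]
  simp only [commutator, LinearMap.sub_apply, LinearMap.mulRight_apply, LinearMap.mulLeft_apply,
    ιC_mul_ιC_commutator_ιC]
  rw [ιC_eq_ι]
  simp only [← map_smul, ← map_sum]
  congr 1
  have hswap : ∑ i, ∑ j, A i j • (2 * dotp (u j) w) • u i
      = -∑ i, ∑ j, A i j • (2 * dotp (u i) w) • u j := by
    rw [Finset.sum_comm, ← Finset.sum_neg_distrib]
    refine Finset.sum_congr rfl fun i _ => ?_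
    rw [← Finset.sum_neg_distrib]
    exact Finset.sum_congr rfl fun j _ => by rw [hA, neg_smul]
  rw [Finset.sum_congr rfl fun i _ => Finset.sum_congr rfl fun j _ => smul_sub _ _ _]
  simp only [Finset.sum_sub_distrib]
  rw [hswap, sub_neg_eq_add, ← two_smul ℝ]
  simp only [Finset.smul_sum, smul_smul]
  refine Finset.sum_congr rfl fun i _ => Finset.sum_congr rfl fun j _ => ?_
  ring_nf

lemma sum_smul_ιC_mul_ιC_eq_two_nsmul_sum_Ioi {κ : Type*} [Fintype κ] [LinearOrder κ]
    [LocallyFiniteOrderTop κ] [LocallyFiniteOrderBot κ] (u : κ → ι → ℝ)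
    (hu : Pairwise fun i j => dotp (u i) (u j) = 0) (A : κ → κ → ℝ)
    (hA : ∀ i j, A j i = -A i j) :
    ∑ i, ∑ j, A i j • (ιC (u i) * ιC (u j))
      = 2 • ∑ i, ∑ j ∈ Finset.Ioi i, A i j • (ιC (u i) * ιC (u j)) := by
  refine sum_sum_eq_two_nsmul_sum_sum_Ioi _ (fun i => ?_) (fun i j => ?_)
  · rw [show A i i = 0 by linarith [hA i i], zero_smul]
  · rcases eq_or_ne i j with rfl | hij
    · rfl
    · rw [hA, ιC_eq_ι, CliffordAlgebra.ι_mul_ι_comm_of_isOrtho (isOrtho_Qneg (hu hij.symm)),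
        neg_smul_neg]

end Clifford

section Splitting

variable {p q : ℕ}

lemma inlm_apply (x : Fin p → ℝ) : inlm p q x = Sum.elim x 0 := rfl

lemma inrm_apply (x : Fin q → ℝ) : inrm p q x = Sum.elim (0 : Fin p → ℝ) x := rfl

lemma dotp_inlm_inlm (x y : Fin p → ℝ) : dotp (inlm p q x) (inlm p q y) = dotp x y := by
  simp [dotp, inlm_apply, Fintype.sum_sum_type]

lemma dotp_inrm_inrm (x y : Fin q → ℝ) : dotp (inrm p q x) (inrm p q y) = dotp x y := by
  simp [dotp, inrm_apply, Fintype.sum_sum_type]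

lemma dotp_inlm_inrm (x : Fin p → ℝ) (y : Fin q → ℝ) : dotp (inlm p q x) (inrm p q y) = 0 := by
  simp [dotp, inlm_apply, inrm_apply, Fintype.sum_sum_type]

lemma dotp_inrm_inlm (x : Fin q → ℝ) (y : Fin p → ℝ) : dotp (inrm p q x) (inlm p q y) = 0 := by
  rw [dotp_comm, dotp_inlm_inrm]

lemma pairwise_dotp_inlm_eb :
    Pairwise fun j k : Fin p => dotp (inlm p q (eb j)) (inlm p q (eb k)) = 0 :=
  fun _ _ h => (dotp_inlm_inlm _ _).trans (dotp_eb_eb_of_ne h)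

lemma pairwise_dotp_inrm_eb :
    Pairwise fun r s : Fin q => dotp (inrm p q (eb r)) (inrm p q (eb s)) = 0 :=
  fun _ _ h => (dotp_inrm_inrm _ _).trans (dotp_eb_eb_of_ne h)

lemma ιC_inrm_eq_sum (v : Fin q → ℝ) :
    ιC (inrm p q v) = ∑ r, v r • ιC (inrm p q (eb r)) :=
  map_eq_sum_smul_eb ((CliffordAlgebra.ι (Qneg (Fin p ⊕ Fin q))).comp (inrm p q)) v

lemma ιC_inrm_mul_ιC_inrm (v w : Fin q → ℝ) :
    ιC (inrm p q v) * ιC (inrm p q w)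
      = ∑ r, ∑ s, (v r * w s) • (ιC (inrm p q (eb r)) * ιC (inrm p q (eb s))) := by
  simp only [ιC_inrm_eq_sum v, ιC_inrm_eq_sum w, Finset.sum_mul_sum, smul_mul_smul_comm]

variable (B : (Fin p → ℝ) →ₗ[ℝ] (Fin p → ℝ) →ₗ[ℝ] (Fin q → ℝ))

def pCoeff (X Y : Fin p → ℝ) (j k : Fin p) : ℝ :=
  dotp (B Y (eb j)) (B X (eb k)) - dotp (B X (eb j)) (B Y (eb k))

def qCoeff (X Y : Fin p → ℝ) (r s : Fin q) : ℝ :=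
  ∑ j, (B Y (eb j) r * B X (eb j) s - B X (eb j) r * B Y (eb j) s)

lemma pCoeff_antisymm (X Y : Fin p → ℝ) (j k : Fin p) :
    pCoeff B X Y k j = -pCoeff B X Y j k := by
  rw [pCoeff, pCoeff, dotp_comm (B Y (eb k)), dotp_comm (B X (eb k))]
  ring

lemma qCoeff_antisymm (X Y : Fin p → ℝ) (r s : Fin q) :
    qCoeff B X Y s r = -qCoeff B X Y r s := by
  rw [qCoeff, qCoeff, ← Finset.sum_neg_distrib]
  exact Finset.sum_congr rfl fun j _ => by ring

lemma Bcl_mul_Bcl (U V : Fin p → ℝ) :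
    Bcl p q B U * Bcl p q B V
      = -∑ j, ∑ k, ιC (inlm p q (eb j)) * ιC (inlm p q (eb k))
          * (ιC (inrm p q (B U (eb j))) * ιC (inrm p q (B V (eb k)))) := by
  simp only [Bcl, Finset.sum_mul_sum, ← Finset.sum_neg_distrib, ιC_eq_ι]
  exact Finset.sum_congr rfl fun j _ => Finset.sum_congr rfl fun k _ =>
    CliffordAlgebra.mul_ι_mul_ι_mul_comm_of_isOrtho _ (isOrtho_Qneg (dotp_inrm_inlm _ _)) _

lemma sum_ιC_inrm_commutator_eq (X Y : Fin p → ℝ) :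
    ∑ j, (ιC (inrm p q (B Y (eb j))) * ιC (inrm p q (B X (eb j)))
        - ιC (inrm p q (B X (eb j))) * ιC (inrm p q (B Y (eb j))))
      = ∑ r, ∑ s, qCoeff B X Y r s • (ιC (inrm p q (eb r)) * ιC (inrm p q (eb s))) := by
  rw [Finset.sum_congr rfl fun j _ => by rw [ιC_inrm_mul_ιC_inrm, ιC_inrm_mul_ιC_inrm]]
  simp only [← Finset.sum_sub_distrib, ← sub_smul, qCoeff, Finset.sum_smul]
  rw [Finset.sum_comm]
  exact Finset.sum_congr rfl fun r _ => Finset.sum_comm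

lemma Bcl_commutator_eq (X Y : Fin p → ℝ) :
    Bcl p q B Y * Bcl p q B X - Bcl p q B X * Bcl p q B Y
      = ∑ j, ∑ k, pCoeff B X Y j k • (ιC (inlm p q (eb j)) * ιC (inlm p q (eb k)))
        + ∑ r, ∑ s, qCoeff B X Y r s • (ιC (inrm p q (eb r)) * ιC (inrm p q (eb s))) := by
  let x j := inrm p q (B X (eb j))
  let y j := inrm p q (B Y (eb j))
  let N j k := ιC (x j) * ιC (y k) - ιC (y j) * ιC (x k)
  let T j k := ιC (inlm p q (eb j)) * ιC (inlm p q (eb k)) * N j k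
  have hT : Bcl p q B Y * Bcl p q B X - Bcl p q B X * Bcl p q B Y = ∑ j, ∑ k, T j k := by
    simp only [Bcl_mul_Bcl, T, N, mul_sub, Finset.sum_sub_distrib]
    abel
  have hsymmetrise : ∑ j, ∑ k, T j k = (1 / 2 : ℝ) • ∑ j, ∑ k, (T j k + T k j) := by
    simp only [Finset.sum_add_distrib]
    rw [Finset.sum_comm (f := fun j k => T k j), ← two_smul ℝ, smul_smul]
    norm_num
  have hpair : ∀ j k, T j k + T k j = (2 * pCoeff B X Y j k) •
      (ιC (inlm p q (eb j)) * ιC (inlm p q (eb k))) + (-2 * dotp (eb j) (eb k)) • N k j := by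
    intro j k
    rw [ιC_mul_ιC_mul_add_swap, ιC_mul_ιC_sub_swap, mul_smul_comm, mul_one, dotp_inlm_inlm]
    simp only [y, x, dotp_inrm_inrm, pCoeff]
  have hdiag : ∀ j, ∑ k, (-2 * dotp (eb j) (eb k)) • N k j = (-2 : ℝ) • N j j := by
    intro j
    simp only [dotp_eb_left]
    simp only [eb, Pi.single_apply, mul_ite, mul_one, mul_zero, ite_smul, zero_smul,
      Finset.sum_ite_eq, Finset.mem_univ, if_true]
  rw [hT, hsymmetrise]
  simp only [hpair, Finset.sum_add_distrib, hdiag, smul_add, ← Finset.smul_sum, smul_smul,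
    ← sum_ιC_inrm_commutator_eq]
  congr 1
  · simp only [Finset.smul_sum, smul_smul, ← mul_assoc]
    norm_num
  · rw [show (1 / 2 : ℝ) * -2 = -1 by norm_num, neg_one_smul, ← Finset.sum_neg_distrib]
    simp only [N, x, y, neg_sub]

end Splitting

section Adjoint

variable {p q : ℕ} {B : (Fin p → ℝ) →ₗ[ℝ] (Fin p → ℝ) →ₗ[ℝ] (Fin q → ℝ)}
  {Bstar : (Fin p → ℝ) →ₗ[ℝ] (Fin q → ℝ) →ₗ[ℝ] (Fin p → ℝ)}

lemma pCoeff_eq (hadj : ∀ x y n, dotp (B x y) n = dotp y (Bstar x n)) (X Y : Fin p → ℝ)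
    (j k : Fin p) :
    pCoeff B X Y j k
      = dotp (Bstar X (B Y (eb j))) (eb k) - dotp (Bstar Y (B X (eb j))) (eb k) := by
  rw [pCoeff, dotp_comm (B Y _), hadj, dotp_comm (B X _), hadj, dotp_comm (eb k),
    dotp_comm (eb k)]

lemma apply_eb_apply_eq (hadj : ∀ x y n, dotp (B x y) n = dotp y (Bstar x n))
    (x : Fin p → ℝ) (j : Fin p) (r : Fin q) : B x (eb j) r = Bstar x (eb r) j := by
  rw [← dotp_eb_right (B x (eb j)), hadj, dotp_eb_left]

lemma qCoeff_eq (hadj : ∀ x y n, dotp (B x y) n = dotp y (Bstar x n)) (X Y : Fin p → ℝ)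
    (r s : Fin q) :
    qCoeff B X Y r s
      = dotp (B X (Bstar Y (eb r))) (eb s) - dotp (B Y (Bstar X (eb r))) (eb s) := by
  simp only [qCoeff, dotp_eb_right, map_eq_sum_smul_eb (B X) (Bstar Y (eb r)),
    map_eq_sum_smul_eb (B Y) (Bstar X (eb r)), Finset.sum_apply, Pi.smul_apply, smul_eq_mul,
    ← Finset.sum_sub_distrib, apply_eb_apply_eq hadj]

lemma sum_sum_pCoeff_mul_smul_eb (hadj : ∀ x y n, dotp (B x y) n = dotp y (Bstar x n))
    (X Y Z : Fin p → ℝ) :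
    ∑ j, ∑ k, (pCoeff B X Y j k * Z j) • eb k = Bstar X (B Y Z) - Bstar Y (B X Z) := by
  rw [← LinearMap.comp_apply, ← LinearMap.comp_apply, ← LinearMap.sub_apply,
    ← sum_sum_apply_mul_smul_eb]
  simp only [pCoeff_eq hadj, dotp_eb_right, LinearMap.sub_apply, LinearMap.comp_apply,
    Pi.sub_apply]

lemma sum_sum_qCoeff_mul_smul_eb (hadj : ∀ x y n, dotp (B x y) n = dotp y (Bstar x n))
    (X Y : Fin p → ℝ) (Z : Fin q → ℝ) :
    ∑ r, ∑ s, (qCoeff B X Y r s * Z r) • eb s = B X (Bstar Y Z) - B Y (Bstar X Z) := by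
  rw [← LinearMap.comp_apply, ← LinearMap.comp_apply, ← LinearMap.sub_apply,
    ← sum_sum_apply_mul_smul_eb]
  simp only [qCoeff_eq hadj, dotp_eb_right, LinearMap.sub_apply, LinearMap.comp_apply,
    Pi.sub_apply]

end Adjoint

theorem stmt4_general (p q : ℕ)
    (B : (Fin p → ℝ) →ₗ[ℝ] (Fin p → ℝ) →ₗ[ℝ] (Fin q → ℝ))
    (Bstar : (Fin p → ℝ) →ₗ[ℝ] (Fin q → ℝ) →ₗ[ℝ] (Fin p → ℝ))
    (hadj : ∀ (x y : Fin p → ℝ) (n : Fin q → ℝ), dotp (B x y) n = dotp y (Bstar x n)) :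
    (∀ X Y : Fin p → ℝ,
      (1 / 4 : ℝ) • (Bcl p q B Y * Bcl p q B X - Bcl p q B X * Bcl p q B Y)
        = (1 / 2 : ℝ) • (∑ j : Fin p, ∑ k ∈ Finset.Ioi j,
            (dotp (Bstar X (B Y (eb j))) (eb k) - dotp (Bstar Y (B X (eb j))) (eb k)) •
              (ιC (inlm p q (eb j)) * ιC (inlm p q (eb k))))
          + (1 / 2 : ℝ) • (∑ r : Fin q, ∑ s ∈ Finset.Ioi r,
            (dotp (B X (Bstar Y (eb r))) (eb s) - dotp (B Y (Bstar X (eb r))) (eb s)) •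
              (ιC (inrm p q (eb r)) * ιC (inrm p q (eb s))))) ∧
    (∀ (X Y Zp : Fin p → ℝ) (Zq : Fin q → ℝ),
      ((1 / 4 : ℝ) • (Bcl p q B Y * Bcl p q B X - Bcl p q B X * Bcl p q B Y))
          * ιC (inlm p q Zp + inrm p q Zq)
        - ιC (inlm p q Zp + inrm p q Zq)
          * ((1 / 4 : ℝ) • (Bcl p q B Y * Bcl p q B X - Bcl p q B X * Bcl p q B Y))
      = ιC (inlm p q (Bstar X (B Y Zp)) - inlm p q (Bstar Y (B X Zp))
          + inrm p q (B X (Bstar Y Zq)) - inrm p q (B Y (Bstar X Zq)))) := by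
  refine ⟨fun X Y => ?_, fun X Y Zp Zq => ?_⟩
  · rw [Bcl_commutator_eq,
      sum_smul_ιC_mul_ιC_eq_two_nsmul_sum_Ioi _ pairwise_dotp_inlm_eb _ (pCoeff_antisymm B X Y),
      sum_smul_ιC_mul_ιC_eq_two_nsmul_sum_Ioi _ pairwise_dotp_inrm_eb _ (qCoeff_antisymm B X Y)]
    simp only [pCoeff_eq hadj, qCoeff_eq hadj]
    module
  · rw [Bcl_commutator_eq, smul_mul_assoc, mul_smul_comm, ← smul_sub, add_mul, mul_add,
      add_sub_add_comm, sum_smul_ιC_mul_ιC_commutator_ιC _ _ (pCoeff_antisymm B X Y),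
      sum_smul_ιC_mul_ιC_commutator_ιC _ _ (qCoeff_antisymm B X Y)]
    simp only [dotp_add_right, dotp_inlm_inlm, dotp_inlm_inrm, dotp_inrm_inlm, dotp_inrm_inrm,
      dotp_eb_left, add_zero, zero_add, ← map_smul, ← map_sum, sum_sum_pCoeff_mul_smul_eb hadj,
      sum_sum_qCoeff_mul_smul_eb hadj]
    rw [ιC_eq_ι]
    simp only [map_sub, map_add]
    module

/-- Let `B : ℝ^p × ℝ^p → ℝ^q` be a symmetric bilinear map with partial adjoint
`B* : ℝ^p × ℝ^q → ℝ^p` (so `⟨B(x,y), n⟩ = ⟨y, B*(x,n)⟩`), and for `X ∈ ℝ^p` let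
`B(X) := Σ_{j=1}^p e_j · B(X, e_j) ∈ Cl(N)`.  Then for all `X, Y ∈ ℝ^p`:
`(1/4)(B(Y)·B(X) − B(X)·B(Y))
  = (1/2)·Σ_{j<k} (⟨B*(X,B(Y,e_j)),e_k⟩ − ⟨B*(Y,B(X,e_j)),e_k⟩) e_j·e_k
  + (1/2)·Σ_{r<s} (⟨B(X,B*(Y,n_r)),n_s⟩ − ⟨B(Y,B*(X,n_r)),n_s⟩) n_r·n_s`,
and for every `Z = Z_p + Z_q ∈ ℝ^p ⊕ ℝ^q`,
`[(1/4)(B(Y)·B(X) − B(X)·B(Y)), Z]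
  = B*(X,B(Y,Z_p)) − B*(Y,B(X,Z_p)) + B(X,B*(Y,Z_q)) − B(Y,B*(X,Z_q))`. -/
theorem stmt4 (p q : ℕ)
    (B : (Fin p → ℝ) →ₗ[ℝ] (Fin p → ℝ) →ₗ[ℝ] (Fin q → ℝ))
    (Bstar : (Fin p → ℝ) →ₗ[ℝ] (Fin q → ℝ) →ₗ[ℝ] (Fin p → ℝ))
    (hsymm : ∀ x y : Fin p → ℝ, B x y = B y x)
    (hadj : ∀ (x y : Fin p → ℝ) (n : Fin q → ℝ), dotp (B x y) n = dotp y (Bstar x n)) :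
    (∀ X Y : Fin p → ℝ,
      (1 / 4 : ℝ) • (Bcl p q B Y * Bcl p q B X - Bcl p q B X * Bcl p q B Y)
        = (1 / 2 : ℝ) • (∑ j : Fin p, ∑ k ∈ Finset.Ioi j,
            (dotp (Bstar X (B Y (eb j))) (eb k) - dotp (Bstar Y (B X (eb j))) (eb k)) •
              (ιC (inlm p q (eb j)) * ιC (inlm p q (eb k))))
          + (1 / 2 : ℝ) • (∑ r : Fin q, ∑ s ∈ Finset.Ioi r,
            (dotp (B X (Bstar Y (eb r))) (eb s) - dotp (B Y (Bstar X (eb r))) (eb s)) •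
              (ιC (inrm p q (eb r)) * ιC (inrm p q (eb s))))) ∧
    (∀ (X Y Zp : Fin p → ℝ) (Zq : Fin q → ℝ),
      ((1 / 4 : ℝ) • (Bcl p q B Y * Bcl p q B X - Bcl p q B X * Bcl p q B Y))
          * ιC (inlm p q Zp + inrm p q Zq)
        - ιC (inlm p q Zp + inrm p q Zq)
          * ((1 / 4 : ℝ) • (Bcl p q B Y * Bcl p q B X - Bcl p q B X * Bcl p q B Y))
      = ιC (inlm p q (Bstar X (B Y Zp)) - inlm p q (Bstar Y (B X Zp))
          + inrm p q (B X (Bstar Y Zq)) - inrm p q (B Y (Bstar X Zq)))) :=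
  stmt4_general p q B Bstar hadj
end
end

section
/- Let g ∈ ℍ^ℂ satisfy g·ḡ = 1. Then for every x = (x₀,x₁,x₂,x₃) ∈ ℝ⁴ there exists y = (y₀,y₁,y₂,y₃) ∈ ℝ⁴ such that ḡ·X(x)·ĝ = X(y), where X(x) := i·x₀·1 + x₁·I + x₂·J + x₃·(JI), and moreover y₀² − y₁² − y₂² − y₃² = x₀² − x₁² − x₂² − x₃². (In other words, the twisted conjugation X ↦ ḡ·X·ĝ by a unit complex quaternion preserves the real form {i·x₀ + x₁I + x₂J + x₃JI : x ∈ ℝ⁴} of the Minkowski space ℝ^{1,3} together with its quadratic form.) -/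
/-!
`ℍ^ℂ` is modelled as `Quaternion ℂ` (complex coefficients on `1, I, J, K`, central complex
unit `i = Complex.I`, `I² = J² = K² = −1`, `I*J = K = −J*I`).  `qbar` is the quaternionic
conjugate `ā = a₀ − a₁I − a₂J − a₃K` and `qhat` the coefficientwise complex conjugate `â`.
-/

noncomputable section

/-- The quaternionic conjugate `ā := a₀ − a₁I − a₂J − a₃K`. -/
def qbar (a : Quaternion ℂ) : Quaternion ℂ := ⟨a.re, -a.imI, -a.imJ, -a.imK⟩

/-- Coefficientwise complex conjugation `â` on the complex quaternions. -/
def qhat (a : Quaternion ℂ) : Quaternion ℂ :=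
  ⟨starRingEnd ℂ a.re, starRingEnd ℂ a.imI, starRingEnd ℂ a.imJ, starRingEnd ℂ a.imK⟩

/-- The complex quaternion `X(x) := i·x₀·1 + x₁·I + x₂·J + x₃·(JI)` (note `JI = −K`). -/
def Xq (x : Fin 4 → ℝ) : Quaternion ℂ :=
  ⟨Complex.I * (x 0 : ℂ), ((x 1 : ℝ) : ℂ), ((x 2 : ℝ) : ℂ), -((x 3 : ℝ) : ℂ)⟩

/-!
Write `ā = star a`. The points `X(y)` are exactly the `q` with `q̂ = -q̄`. As `a ↦ â` is a ring
automorphism commuting with `star`, the hat and the bar of `ḡ q ĝ` are `(ḡ)^ q̂ g` and `(ḡ)^ q̄ g`,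
so this reality condition is preserved. The Minkowski form is `-N(X(y))` for the complex
quaternion norm `N`, which is multiplicative with `N(ḡ) = N(g) = 1` and `N(ĝ) = conj N(g) = 1`.
-/

open Quaternion

lemma qbar_eq_star (a : ℍ[ℂ]) : qbar a = star a := by
  ext <;> simp [qbar]

@[simp] lemma qhat_re (a : ℍ[ℂ]) : (qhat a).re = starRingEnd ℂ a.re := rfl
@[simp] lemma qhat_imI (a : ℍ[ℂ]) : (qhat a).imI = starRingEnd ℂ a.imI := rfl
@[simp] lemma qhat_imJ (a : ℍ[ℂ]) : (qhat a).imJ = starRingEnd ℂ a.imJ := rfl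
@[simp] lemma qhat_imK (a : ℍ[ℂ]) : (qhat a).imK = starRingEnd ℂ a.imK := rfl

lemma qhat_mul (a b : ℍ[ℂ]) : qhat (a * b) = qhat a * qhat b := by
  ext <;> simp [re_mul, imI_mul, imJ_mul, imK_mul]

lemma qhat_qhat (a : ℍ[ℂ]) : qhat (qhat a) = a := by
  ext <;> simp

lemma star_qhat (a : ℍ[ℂ]) : star (qhat a) = qhat (star a) := by
  ext <;> simp

lemma normSq_qhat (a : ℍ[ℂ]) : normSq (qhat a) = starRingEnd ℂ (normSq a) := by
  simp [normSq_def']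

lemma normSq_eq_one_of_mul_star_eq_one {a : ℍ[ℂ]} (h : a * star a = 1) : normSq a = 1 :=
  coe_injective (by rw [← self_mul_star, h, coe_one])

/-- The real form `{Xq y}` of `ℝ^{1,3}`. -/
def IsMinkowskiReal (q : ℍ[ℂ]) : Prop := qhat q = -star q

def minkowskiCoords (q : ℍ[ℂ]) : Fin 4 → ℝ := ![q.re.im, q.imI.re, q.imJ.re, -q.imK.re]

lemma IsMinkowskiReal.Xq_minkowskiCoords {q : ℍ[ℂ]} (hq : IsMinkowskiReal q) :
    Xq (minkowskiCoords q) = q := by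
  have hre : q.re.re = 0 := by
    have := congrArg (fun q : ℍ[ℂ] => q.re.re) hq
    simp at this
    linarith
  have hI := Complex.conj_eq_iff_re.mp (by simpa using congrArg QuaternionAlgebra.imI hq)
  have hJ := Complex.conj_eq_iff_re.mp (by simpa using congrArg QuaternionAlgebra.imJ hq)
  have hK := Complex.conj_eq_iff_re.mp (by simpa using congrArg QuaternionAlgebra.imK hq)
  ext
  · apply Complex.ext <;> simp [Xq, minkowskiCoords, hre]
  · simpa [Xq, minkowskiCoords] using hI
  · simpa [Xq, minkowskiCoords] using hJ
  · simpa [Xq, minkowskiCoords] using hK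

lemma isMinkowskiReal_Xq (x : Fin 4 → ℝ) : IsMinkowskiReal (Xq x) := by
  ext <;> (simp; simp [Xq])

lemma IsMinkowskiReal.star_mul_mul_qhat {q : ℍ[ℂ]} (hq : IsMinkowskiReal q) (g : ℍ[ℂ]) :
    IsMinkowskiReal (star g * q * qhat g) := by
  rw [IsMinkowskiReal, qhat_mul, qhat_mul, qhat_qhat, hq, star_mul, star_mul, star_qhat,
    star_star, mul_assoc,
    -- without the explicit type, `rw` fails to unify the `Neg` instance of `Quaternion ℂ`
    @neg_mul ℍ[ℂ] _ _ _ _, @mul_neg ℍ[ℂ] _ _ _ _]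

lemma normSq_Xq (x : Fin 4 → ℝ) :
    normSq (Xq x) = ((-(x 0 ^ 2 - x 1 ^ 2 - x 2 ^ 2 - x 3 ^ 2) : ℝ) : ℂ) := by
  rw [normSq_def']
  simp [Xq, mul_pow]
  ring

lemma normSq_star_mul_mul_qhat {g : ℍ[ℂ]} (hg : normSq g = 1) (q : ℍ[ℂ]) :
    normSq (star g * q * qhat g) = normSq q := by
  rw [map_mul, map_mul, normSq_star, normSq_qhat, hg, map_one, one_mul, mul_one]

/-- If `g ∈ ℍ^ℂ` satisfies `g·ḡ = 1`, then for every `x ∈ ℝ⁴` there is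
`y ∈ ℝ⁴` with `ḡ·X(x)·ĝ = X(y)` and `y₀² − y₁² − y₂² − y₃² = x₀² − x₁² − x₂² − x₃²`:
twisted conjugation by a unit complex quaternion preserves the real form
`{i·x₀ + x₁I + x₂J + x₃JI}` of `ℝ^{1,3}` together with its quadratic form. -/
theorem stmt7 (g : Quaternion ℂ) (hg : g * qbar g = 1) :
    ∀ x : Fin 4 → ℝ, ∃ y : Fin 4 → ℝ,
      qbar g * Xq x * qhat g = Xq y ∧
      y 0 ^ 2 - y 1 ^ 2 - y 2 ^ 2 - y 3 ^ 2 = x 0 ^ 2 - x 1 ^ 2 - x 2 ^ 2 - x 3 ^ 2 := by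
  intro x
  rw [qbar_eq_star] at hg ⊢
  have hreal := (isMinkowskiReal_Xq x).star_mul_mul_qhat g
  refine ⟨minkowskiCoords _, hreal.Xq_minkowskiCoords.symm, ?_⟩
  have hnorm := normSq_star_mul_mul_qhat (normSq_eq_one_of_mul_star_eq_one hg) (Xq x)
  rw [← hreal.Xq_minkowskiCoords, normSq_Xq, normSq_Xq] at hnorm
  exact neg_injective (Complex.ofReal_injective hnorm)
end
end

section
/- Let a, b ∈ ℂ with |a|² > |b|², set g := (1/2)(1 + iI)(a + bJ) ∈ ℍ^ℂ and D := |a|² − |b|². Then (2i/D)·ḡ·ĝ = I + ( i·y₀·1 + y₂·J + y₃·(JI) ) for some real numbers y₀, y₂, y₃ satisfying −y₀² + y₂² + y₃² = −1 and y₀ ≥ 1. (This shows that the map π(g) := (2i/|g|²)·ḡ·ĝ, used to define the hyperbolic Gauss map, takes values in I + ℍ², where ℍ² := {i·x₀ + x₂J + x₃JI : x₀, x₂, x₃ ∈ ℝ, −x₀² + x₂² + x₃² = −1, x₀ > 0}.) -/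
/-!
`ℍ^ℂ` is modelled as `Quaternion ℂ` (complex coefficients on `1, I, J, K`, central complex
unit `i = Complex.I`, `I² = J² = K² = −1`, `I*J = K = −J*I`, so `JI = −K`).  `qbar` is the
quaternionic conjugate and `qhat` the coefficientwise complex conjugate.
-/

noncomputable section

/-- The element `g := (1/2)(1 + iI)(a + bJ) ∈ ℍ^ℂ`. -/
def gab (a b : ℂ) : Quaternion ℂ :=
  (2 : ℂ)⁻¹ • ((⟨1, Complex.I, 0, 0⟩ : Quaternion ℂ) * (⟨a, 0, b, 0⟩ : Quaternion ℂ))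

/-!
Writing `w := a b̄`, a direct expansion gives
`ḡ ĝ = ½ (|a|² + |b|²) − ½ i (|a|² − |b|²) I + i (Im w) J − i (Re w) K`,
so `y₀ = (|a|² + |b|²) / D` and `(y₂, y₃) = −2 (Im w, Re w) / D`. These lie on the hyperboloid
because `(|a|² + |b|²)² − (|a|² − |b|²)² = 4 |a|² |b|² = 4 |w|²`.
-/

open Complex ComplexConjugate

lemma qbar_gab_mul_qhat_gab (a b : ℂ) :
    qbar (gab a b) * qhat (gab a b) =
      ⟨((‖a‖ ^ 2 + ‖b‖ ^ 2 : ℝ) : ℂ) / 2, -I * ((‖a‖ ^ 2 - ‖b‖ ^ 2 : ℝ) : ℂ) / 2,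
        I * (a * conj b).im, -I * (a * conj b).re⟩ := by
  ext <;>
    simp only [Quaternion.re_mul, Quaternion.imI_mul, Quaternion.imJ_mul, Quaternion.imK_mul] <;>
    simp [gab, qbar, qhat, Complex.ext_iff, Complex.sq_norm, Complex.normSq_apply] <;>
    constructor <;> ring

lemma sq_re_add_sq_im_mul_conj (a b : ℂ) :
    (a * conj b).re ^ 2 + (a * conj b).im ^ 2 = ‖a‖ ^ 2 * ‖b‖ ^ 2 := by
  rw [sq, sq, ← Complex.normSq_apply, ← Complex.sq_norm, norm_mul, Complex.norm_conj, mul_pow]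

lemma neg_sq_add_sq_add_sq_eq_neg_one_of_sq_add_sq_eq_mul {s t u v : ℝ}
    (h : u ^ 2 + v ^ 2 = s * t) (hst : s ≠ t) :
    -((s + t) / (s - t)) ^ 2 + (2 * u / (s - t)) ^ 2 + (2 * v / (s - t)) ^ 2 = -1 := by
  have : s - t ≠ 0 := sub_ne_zero.mpr hst
  field_simp
  linear_combination 4 * h

lemma one_le_add_div_sub {s t : ℝ} (ht : 0 ≤ t) (hts : t < s) : 1 ≤ (s + t) / (s - t) := by
  rw [le_div_iff₀ (sub_pos.mpr hts)]
  linarith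

/-- For `a, b ∈ ℂ` with `|a|² > |b|²`, `g := (1/2)(1+iI)(a+bJ)` and
`D := |a|² − |b|²`, one has `(2i/D)·ḡ·ĝ = I + (i·y₀·1 + y₂·J + y₃·(JI))` for some reals
`y₀, y₂, y₃` with `−y₀² + y₂² + y₃² = −1` and `y₀ ≥ 1`; i.e. the map
`π(g) = (2i/|g|²)·ḡ·ĝ` defining the hyperbolic Gauss map takes values in `I + ℍ²`. -/
theorem stmt8 (a b : ℂ) (hab : ‖b‖ ^ 2 < ‖a‖ ^ 2) :
    ∃ y₀ y₂ y₃ : ℝ,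
      (2 * Complex.I / ((‖a‖ ^ 2 - ‖b‖ ^ 2 : ℝ) : ℂ)) •
          (qbar (gab a b) * qhat (gab a b))
        = (⟨0, 1, 0, 0⟩ : Quaternion ℂ)
            + (⟨Complex.I * (y₀ : ℂ), 0, ((y₂ : ℝ) : ℂ), -((y₃ : ℝ) : ℂ)⟩ : Quaternion ℂ) ∧
      -(y₀ ^ 2) + y₂ ^ 2 + y₃ ^ 2 = -1 ∧ 1 ≤ y₀ := by
  have hD : ((‖a‖ ^ 2 - ‖b‖ ^ 2 : ℝ) : ℂ) ≠ 0 := by exact_mod_cast (sub_pos.mpr hab).ne'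
  refine ⟨(‖a‖ ^ 2 + ‖b‖ ^ 2) / (‖a‖ ^ 2 - ‖b‖ ^ 2), 2 * -(a * conj b).im / (‖a‖ ^ 2 - ‖b‖ ^ 2),
    2 * -(a * conj b).re / (‖a‖ ^ 2 - ‖b‖ ^ 2), ?_,
    neg_sq_add_sq_add_sq_eq_neg_one_of_sq_add_sq_eq_mul
      (by rw [neg_sq, neg_sq, add_comm, sq_re_add_sq_im_mul_conj]) hab.ne',
    one_le_add_div_sub (by positivity) hab⟩
  -- The smul must be split into components before the product formula is substituted:
  -- rewriting inside first leaves a `QuaternionAlgebra` literal that the `Quaternion` lemmas miss.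
  apply Quaternion.ext <;>
    simp only [Quaternion.re_smul, Quaternion.imI_smul, Quaternion.imJ_smul, Quaternion.imK_smul,
      smul_eq_mul, QuaternionAlgebra.re_add, QuaternionAlgebra.imI_add, QuaternionAlgebra.imJ_add,
      QuaternionAlgebra.imK_add] <;>
    simp only [qbar_gab_mul_qhat_gab] <;>
    push_cast at hD ⊢ <;> field_simp <;> ring_nf <;> simp only [I_sq] <;> ring
end
end
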